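/- A complete set of representatives for the orbits of SL₂(ℤ) acting on M₂(ℚ) by right multiplication is given by: the zero matrix; the matrices [[0,a],[0,b]] with a, b ∈ ℚ and either a > 0, or a = 0 and b > 0; and the matrices [[a,b],[0,α]] with a ∈ ℚ, a > 0, α ∈ ℚ×, and b ∈ ℚ taken modulo aℤ. -/

import Mathlib

/-! Every nonzero rational row is a positive multiple `t • (p, q)` of a primitive integer row, and
`SL₂(ℤ)` moves `(p, q)` to `(0, 1)`. Reducing the bottom row this way (or the top row, if the bottom
one vanishes) makes a matrix upper triangular with positive lower-right entry; the sign `-1` and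
the shears `T ^ n`, which add integer multiples of `a` to `b`, then bring it into `orbitReps`.
Conversely, an element of `SL₂(ℤ)` relating two representatives must have vanishing lower-left
entry, so it is `±T ^ n`; the determinant separates singular from regular representatives, and
the normalisations `a > 0` and `0 ≤ b < a` force the sign `+` and `n = 0`. -/

open Matrix

/-- The distinguished set of matrices in `M₂(ℚ)`: the zero matrix;
`[[0,a],[0,b]]` with `a > 0`, or `a = 0` and `b > 0`;
`[[a,b],[0,α]]` with `a > 0`, `α ≠ 0`, and `0 ≤ b < a` (i.e. `b` mod `aℤ`). -/
def orbitReps : Set (Matrix (Fin 2) (Fin 2) ℚ) :=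
  {0}
  ∪ {M | ∃ a b : ℚ, (0 < a ∨ (a = 0 ∧ 0 < b)) ∧ M = !![0, a; 0, b]}
  ∪ {M | ∃ a b α : ℚ, 0 < a ∧ α ≠ 0 ∧ 0 ≤ b ∧ b < a ∧ M = !![a, b; 0, α]}

open MatrixGroups ModularGroup

def toRatMatrix : SL(2, ℤ) →* Matrix (Fin 2) (Fin 2) ℚ :=
  (Int.castRingHom ℚ).mapMatrix.toMonoidHom.comp SpecialLinearGroup.coeMonoidHom

@[simp] lemma toRatMatrix_apply (g : SL(2, ℤ)) (i j : Fin 2) : toRatMatrix g i j = g i j := rfl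

lemma det_toRatMatrix (g : SL(2, ℤ)) : (toRatMatrix g).det = 1 := by
  change ((Int.castRingHom ℚ).mapMatrix (g : Matrix (Fin 2) (Fin 2) ℤ)).det = 1
  rw [← RingHom.map_det]; simp

lemma toRatMatrix_neg (g : SL(2, ℤ)) : toRatMatrix (-g) = -toRatMatrix g := by
  ext i j; simp

lemma toRatMatrix_T_zpow (n : ℤ) : toRatMatrix (T ^ n) = !![(1 : ℚ), n; 0, 1] := by
  ext i j; fin_cases i <;> fin_cases j <;> simp [coe_T_zpow]

lemma mul_toRatMatrix_apply (A : Matrix (Fin 2) (Fin 2) ℚ) (g : SL(2, ℤ)) (i j : Fin 2) :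
    (A * toRatMatrix g) i j = A i 0 * g 0 j + A i 1 * g 1 j := by
  simp [mul_apply, Fin.sum_univ_two]

lemma exists_eq_pos_mul_isCoprime {x y : ℚ} (h : x ≠ 0 ∨ y ≠ 0) :
    ∃ t : ℚ, 0 < t ∧ ∃ p q : ℤ, IsCoprime p q ∧ x = t * p ∧ y = t * q := by
  -- `(x, y) = (x.num * y.den, y.num * x.den) / (x.den * y.den)`; divide out the gcd of the numerators.
  have hpos : 0 < Int.gcd (x.num * y.den) (y.num * x.den) :=
    Int.gcd_pos_iff.mpr (by simpa using h)
  obtain ⟨g, p, q, hg, hpq, hp, hq⟩ := Int.exists_gcd_one' hpos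
  refine ⟨g / (x.den * y.den), by positivity, p, q, Int.isCoprime_iff_gcd_eq_one.mpr hpq, ?_, ?_⟩
  · rw [div_mul_eq_mul_div, eq_div_iff (by positivity), ← mul_assoc, Rat.mul_den_eq_num]
    exact_mod_cast hp.trans (mul_comm _ _)
  · rw [div_mul_eq_mul_div, eq_div_iff (by positivity), mul_comm (x.den : ℚ), ← mul_assoc,
      Rat.mul_den_eq_num]
    exact_mod_cast hq.trans (mul_comm _ _)

lemma IsCoprime.exists_SL2Z_row_mul_eq {p q : ℤ} (h : IsCoprime p q) :
    ∃ g : SL(2, ℤ), p * g 0 0 + q * g 1 0 = 0 ∧ p * g 0 1 + q * g 1 1 = 1 := by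
  obtain ⟨u, v, huv⟩ := h
  refine ⟨⟨!![q, u; -p, v], by rw [det_fin_two_of]; linear_combination huv⟩, ?_, ?_⟩
  · show p * q + q * -p = 0; ring
  · show p * u + q * v = 1; linear_combination huv

lemma exists_vecMul_toRatMatrix_eq {v : Fin 2 → ℚ} (hv : v ≠ 0) :
    ∃ g : SL(2, ℤ), ∃ t : ℚ, 0 < t ∧ v ᵥ* toRatMatrix g = ![0, t] := by
  have hv' : v 0 ≠ 0 ∨ v 1 ≠ 0 := by
    contrapose! hv
    ext i; fin_cases i <;> simp [hv]
  obtain ⟨t, ht, p, q, hpq, hp, hq⟩ := exists_eq_pos_mul_isCoprime hv'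
  obtain ⟨g, hg₀, hg₁⟩ := hpq.exists_SL2Z_row_mul_eq
  have h₀ : (p * g 0 0 + q * g 1 0 : ℚ) = 0 := by exact_mod_cast hg₀
  have h₁ : (p * g 0 1 + q * g 1 1 : ℚ) = 1 := by exact_mod_cast hg₁
  refine ⟨g, t, ht, ?_⟩
  ext j; fin_cases j <;> simp [vecMul, dotProduct, hp, hq, mul_assoc, ← mul_add, h₀, h₁]

def SameOrbit (A B : Matrix (Fin 2) (Fin 2) ℚ) : Prop :=
  ∃ g : SL(2, ℤ), A * toRatMatrix g = B

namespace SameOrbit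

@[refl] lemma refl (A : Matrix (Fin 2) (Fin 2) ℚ) : SameOrbit A A := ⟨1, by simp⟩

lemma trans {A B C : Matrix (Fin 2) (Fin 2) ℚ} :
    SameOrbit A B → SameOrbit B C → SameOrbit A C := by
  rintro ⟨g, rfl⟩ ⟨h, rfl⟩
  exact ⟨g * h, by simp [mul_assoc]⟩

lemma symm {A B : Matrix (Fin 2) (Fin 2) ℚ} : SameOrbit A B → SameOrbit B A := by
  rintro ⟨g, rfl⟩
  exact ⟨g⁻¹, by rw [mul_assoc, ← map_mul, mul_inv_cancel, map_one, mul_one]⟩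

lemma det_eq {A B : Matrix (Fin 2) (Fin 2) ℚ} : SameOrbit A B → A.det = B.det := by
  rintro ⟨g, rfl⟩
  rw [det_mul, det_toRatMatrix, mul_one]

lemma eq_zero_iff {A B : Matrix (Fin 2) (Fin 2) ℚ} (h : SameOrbit A B) : A = 0 ↔ B = 0 := by
  constructor
  · obtain ⟨g, rfl⟩ := h; rintro rfl; simp
  · obtain ⟨g, rfl⟩ := h.symm; rintro rfl; simp

lemma neg (A : Matrix (Fin 2) (Fin 2) ℚ) : SameOrbit A (-A) := ⟨-1, by simp [toRatMatrix_neg]⟩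

lemma shear (a b c d : ℚ) (n : ℤ) : SameOrbit !![a, b; c, d] !![a, a * n + b; c, c * n + d] :=
  ⟨T ^ n, by rw [toRatMatrix_T_zpow, mul_fin_two]; simp⟩

end SameOrbit

lemma exists_sameOrbit_upperTriangular {A : Matrix (Fin 2) (Fin 2) ℚ} (hA : A 1 ≠ 0) :
    ∃ a b d : ℚ, 0 < d ∧ SameOrbit A !![a, b; 0, d] := by
  obtain ⟨g, t, ht, hg⟩ := exists_vecMul_toRatMatrix_eq hA
  have hrow : (A * toRatMatrix g) 1 = ![0, t] := hg
  refine ⟨(A * toRatMatrix g) 0 0, (A * toRatMatrix g) 0 1, t, ht, g, ?_⟩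
  rw [eta_fin_two (A * toRatMatrix g), hrow]
  simp

lemma exists_sameOrbit_of_row_one_eq_zero {A : Matrix (Fin 2) (Fin 2) ℚ} (hA₀ : A 0 ≠ 0)
    (hA₁ : A 1 = 0) :
    ∃ t : ℚ, 0 < t ∧ SameOrbit A !![0, t; 0, 0] := by
  obtain ⟨g, t, ht, hg⟩ := exists_vecMul_toRatMatrix_eq hA₀
  have hrow₀ : (A * toRatMatrix g) 0 = ![0, t] := hg
  have hrow₁ : (A * toRatMatrix g) 1 = 0 := by rw [mul_apply_eq_vecMul, hA₁, zero_vecMul]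
  refine ⟨t, ht, g, ?_⟩
  rw [eta_fin_two (A * toRatMatrix g), hrow₀, hrow₁]
  simp

lemma sameOrbit_toIcoMod {a : ℚ} (ha : 0 < a) (b d : ℚ) :
    SameOrbit !![a, b; 0, d] !![a, toIcoMod ha 0 b; 0, d] := by
  convert SameOrbit.shear a b 0 d (-toIcoDiv ha 0 b) using 3
  · rw [← self_sub_toIcoDiv_zsmul, zsmul_eq_mul, Int.cast_neg]
    congr 2
    ring
  · simp

lemma zero_mem_orbitReps : (0 : Matrix (Fin 2) (Fin 2) ℚ) ∈ orbitReps :=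
  Or.inl (Or.inl rfl)

lemma singular_mem_orbitReps {a b : ℚ} (h : 0 < a ∨ a = 0 ∧ 0 < b) :
    !![0, a; 0, b] ∈ orbitReps :=
  Or.inl (Or.inr ⟨a, b, h, rfl⟩)

lemma regular_mem_orbitReps {a b α : ℚ} (ha : 0 < a) (hα : α ≠ 0) (hb₀ : 0 ≤ b) (hba : b < a) :
    !![a, b; 0, α] ∈ orbitReps :=
  Or.inr ⟨a, b, α, ha, hα, hb₀, hba, rfl⟩

lemma exists_mem_orbitReps_of_pos {a : ℚ} (ha : 0 < a) (b : ℚ) {d : ℚ} (hd : d ≠ 0) :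
    ∃ R ∈ orbitReps, SameOrbit !![a, b; 0, d] R := by
  obtain ⟨hb₀, hba⟩ := toIcoMod_mem_Ico' ha b
  exact ⟨_, regular_mem_orbitReps ha hd hb₀ hba, sameOrbit_toIcoMod ha b d⟩

lemma exists_mem_orbitReps_upperTriangular (a b : ℚ) {d : ℚ} (hd : 0 < d) :
    ∃ R ∈ orbitReps, SameOrbit !![a, b; 0, d] R := by
  have hneg : SameOrbit !![a, b; 0, d] !![-a, -b; 0, -d] := by
    simpa using SameOrbit.neg !![a, b; 0, d]
  rcases lt_trichotomy a 0 with ha | rfl | ha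
  · obtain ⟨R, hR, h⟩ := exists_mem_orbitReps_of_pos (neg_pos.2 ha) (-b) (neg_ne_zero.2 hd.ne')
    exact ⟨R, hR, hneg.trans h⟩
  · rcases le_or_gt 0 b with hb | hb
    · exact ⟨_, singular_mem_orbitReps (hb.lt_or_eq.imp id fun h ↦ ⟨h.symm, hd⟩), .refl _⟩
    · exact ⟨_, singular_mem_orbitReps (Or.inl (neg_pos.2 hb)), by simpa using hneg⟩
  · exact exists_mem_orbitReps_of_pos ha b hd.ne'

lemma exists_mem_orbitReps (A : Matrix (Fin 2) (Fin 2) ℚ) : ∃ R ∈ orbitReps, SameOrbit A R := by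
  by_cases hA₁ : A 1 = 0
  · by_cases hA₀ : A 0 = 0
    · refine ⟨0, zero_mem_orbitReps, ?_⟩
      rw [show A = 0 by ext i j; fin_cases i <;> simp [hA₀, hA₁]]
    · obtain ⟨t, ht, h⟩ := exists_sameOrbit_of_row_one_eq_zero hA₀ hA₁
      exact ⟨_, singular_mem_orbitReps (Or.inl ht), h⟩
  · obtain ⟨a, b, d, hd, h⟩ := exists_sameOrbit_upperTriangular hA₁
    obtain ⟨R, hR, h'⟩ := exists_mem_orbitReps_upperTriangular a b hd
    exact ⟨R, hR, h.trans h'⟩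

lemma SL2Z_eq_T_zpow_or_neg_of_apply_one_zero {g : SL(2, ℤ)} (hg : g 1 0 = 0) :
    ∃ n : ℤ, g = T ^ n ∨ g = -T ^ n := by
  have hdet : g 0 0 * g 1 1 = 1 := by
    have := g.det_coe
    rwa [det_fin_two, hg, mul_zero, sub_zero] at this
  rcases Int.eq_one_or_neg_one_of_mul_eq_one' hdet with ⟨h₀, h₁⟩ | ⟨h₀, h₁⟩
  · refine ⟨g 0 1, Or.inl ?_⟩
    ext i j; fin_cases i <;> fin_cases j <;> simp [coe_T_zpow, h₀, h₁, hg]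
  · refine ⟨-g 0 1, Or.inr ?_⟩
    ext i j; fin_cases i <;> fin_cases j <;> simp [coe_T_zpow, h₀, h₁, hg]

lemma upperTriangular_mul_toRatMatrix_cases {a b d a' b' d' : ℚ} {g : SL(2, ℤ)} (hg : g 1 0 = 0)
    (h : !![a, b; 0, d] * toRatMatrix g = !![a', b'; 0, d']) :
    ∃ n : ℤ, (a' = a ∧ b' = a * n + b ∧ d' = d) ∨ (a' = -a ∧ b' = -(a * n + b) ∧ d' = -d) := by
  obtain ⟨n, rfl | rfl⟩ := SL2Z_eq_T_zpow_or_neg_of_apply_one_zero hg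
  · rw [toRatMatrix_T_zpow, mul_fin_two] at h
    simp only [mul_one, mul_zero, add_zero, zero_mul, zero_add, EmbeddingLike.apply_eq_iff_eq,
      vecCons_inj, and_true, true_and] at h
    obtain ⟨⟨rfl, rfl⟩, rfl⟩ := h
    exact ⟨n, Or.inl ⟨rfl, rfl, rfl⟩⟩
  · rw [toRatMatrix_neg, toRatMatrix_T_zpow, mul_neg, mul_fin_two] at h
    simp only [mul_one, mul_zero, add_zero, zero_mul, zero_add, neg_of, neg_cons, neg_add_rev,
      neg_empty, neg_zero, EmbeddingLike.apply_eq_iff_eq, vecCons_inj, and_true, true_and] at h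
    obtain ⟨⟨rfl, rfl⟩, rfl⟩ := h
    exact ⟨n, Or.inr ⟨rfl, by ring, rfl⟩⟩

lemma eq_of_sameOrbit_singular {a b a' b' : ℚ} (hab : 0 < a ∨ a = 0 ∧ 0 < b)
    (hab' : 0 < a' ∨ a' = 0 ∧ 0 < b') (h : SameOrbit !![0, a; 0, b] !![0, a'; 0, b']) :
    !![0, a; 0, b] = !![(0 : ℚ), a'; 0, b'] := by
  obtain ⟨g, hg⟩ := h
  have hg₁₀ : g 1 0 = 0 := by
    have e₀ : a * g 1 0 = 0 := by simpa [mul_toRatMatrix_apply] using congrFun₂ hg 0 0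
    have e₁ : b * g 1 0 = 0 := by simpa [mul_toRatMatrix_apply] using congrFun₂ hg 1 0
    rcases hab with ha | ⟨-, hb⟩
    · exact_mod_cast (mul_eq_zero.1 e₀).resolve_left ha.ne'
    · exact_mod_cast (mul_eq_zero.1 e₁).resolve_left hb.ne'
  obtain ⟨n, ⟨-, rfl, rfl⟩ | ⟨-, rfl, rfl⟩⟩ := upperTriangular_mul_toRatMatrix_cases hg₁₀ hg
  · simp
  · simp only [zero_mul, zero_add, neg_pos, neg_eq_zero] at hab'
    rcases hab with ha | ⟨rfl, hb⟩ <;> rcases hab' with ha' | ⟨ha', hb'⟩ <;> linarith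

lemma eq_of_sameOrbit_regular {a b α a' b' α' : ℚ} (ha : 0 < a) (hα : α ≠ 0)
    (hb : b ∈ Set.Ico 0 a) (ha' : 0 < a') (hb' : b' ∈ Set.Ico 0 a')
    (h : SameOrbit !![a, b; 0, α] !![a', b'; 0, α']) :
    !![a, b; 0, α] = !![a', b'; 0, α'] := by
  obtain ⟨g, hg⟩ := h
  have hg₁₀ : g 1 0 = 0 := by
    have e : α * g 1 0 = 0 := by simpa [mul_toRatMatrix_apply] using congrFun₂ hg 1 0
    exact_mod_cast (mul_eq_zero.1 e).resolve_left hα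
  obtain ⟨n, ⟨ha_eq, rfl, rfl⟩ | ⟨rfl, -, -⟩⟩ := upperTriangular_mul_toRatMatrix_cases hg₁₀ hg
  · subst a'
    have h₁ : toIcoMod ha 0 b = b := (toIcoMod_eq_self ha).2 (by simpa using hb)
    have h₂ : toIcoMod ha 0 (b + n • a) = b + n • a :=
      (toIcoMod_eq_self ha).2 (by simpa [zsmul_eq_mul, mul_comm, add_comm] using hb')
    rw [toIcoMod_add_zsmul, h₁, zsmul_eq_mul] at h₂
    rw [mul_comm, add_comm, ← h₂]
  · linarith

lemma not_sameOrbit_singular_regular {a b a' b' α' : ℚ} (ha' : a' ≠ 0) (hα' : α' ≠ 0) :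
    ¬ SameOrbit !![0, a; 0, b] !![a', b'; 0, α'] := fun h ↦ by
  have hdet := h.det_eq
  simp only [det_fin_two_of] at hdet
  simp_all

lemma eq_of_sameOrbit {R₁ R₂ : Matrix (Fin 2) (Fin 2) ℚ} (h₁ : R₁ ∈ orbitReps)
    (h₂ : R₂ ∈ orbitReps) (h : SameOrbit R₁ R₂) : R₁ = R₂ := by
  by_cases h0 : R₁ = 0
  · rw [h0, h.eq_zero_iff.1 h0]
  have h0' : R₂ ≠ 0 := mt h.eq_zero_iff.2 h0
  rcases h₁ with (h₁ | ⟨a, b, hab, rfl⟩) | ⟨a, b, α, ha, hα, hb, hba, rfl⟩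
  · exact absurd h₁ h0
  all_goals rcases h₂ with (h₂ | ⟨a', b', hab', rfl⟩) | ⟨a', b', α', ha', hα', hb', hba', rfl⟩
  · exact absurd h₂ h0'
  · exact eq_of_sameOrbit_singular hab hab' h
  · exact absurd h (not_sameOrbit_singular_regular ha'.ne' hα')
  · exact absurd h₂ h0'
  · exact absurd h.symm (not_sameOrbit_singular_regular ha.ne' hα)
  · exact eq_of_sameOrbit_regular ha hα ⟨hb, hba⟩ ha' ⟨hb', hba'⟩ h

/-- `orbitReps` is a complete set of representatives for the orbits of `SL₂(ℤ)`
acting on `M₂(ℚ)` by right multiplication: every rational 2×2 matrix lies in the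
orbit of exactly one element of `orbitReps`. -/
theorem orbitReps_complete (A : Matrix (Fin 2) (Fin 2) ℚ) :
    ∃! R : Matrix (Fin 2) (Fin 2) ℚ, R ∈ orbitReps ∧
      ∃ γ : Matrix.SpecialLinearGroup (Fin 2) ℤ,
        A * ((γ : Matrix (Fin 2) (Fin 2) ℤ).map (Int.cast : ℤ → ℚ)) = R := by
  obtain ⟨R, hR, hAR⟩ := exists_mem_orbitReps A
  refine ⟨R, ⟨hR, hAR⟩, fun R' ⟨hR', hAR'⟩ ↦ ?_⟩
  exact eq_of_sameOrbit hR' hR ((SameOrbit.symm hAR').trans hAR)
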